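/- arXiv:2305.10972 — 13 statements merged into one kernel-verified Lean document; each statement's English description precedes it below -/
import Mathlib

section
/- Let D be a finite set of project-degrees partitioned among projects j ∈ P, each degree d having a cost c(d) ∈ ℕ, and let b ∈ ℕ be the budget. Call a set S ⊆ D valid if S contains exactly one degree of each project and the total cost of S is at most b. If for each voter i and project j the utility u_i(S,j) equals 1 when the cost of the degree of j chosen in S lies in the interval [l_i(j), u_i(j)] and is nonzero, and 0 otherwise, then the rule R_{|S|} maximizing ∑_i ∑_j u_i(S,j) over valid sets is shrink-resistant: for any valid optimal set S, any voter i and project j, if the bounds l_i(j), u_i(j) are replaced by new bounds l'_i(j), u'_i(j) with l_i(j) ≤ l'_i(j), u'_i(j) ≤ u_i(j), and l'_i(j) ≤ c_j(S) ≤ u'_i(j) whenever l_i(j) ≤ c_j(S) ≤ u_i(j) (i.e., the interval shrinks toward the chosen cost c_j(S)), then S remains optimal. -/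
open Finset

section PBDefs

variable {V D P : Type*}

/-- A valid outcome: exactly one degree chosen per project, total cost within budget. -/
def ValidSet [DecidableEq P] (proj : D → P) (c : D → ℕ) (b : ℕ) (S : Finset D) : Prop :=
  (∀ j : P, (S.filter fun d => proj d = j).card = 1) ∧ ∑ d ∈ S, c d ≤ b

/-- The cost of the degree of project `j` chosen in `S`. -/
def chosenCost [DecidableEq P] (proj : D → P) (c : D → ℕ) (S : Finset D) (j : P) : ℕ :=
  ∑ d ∈ S.filter (fun d => proj d = j), c d

/-- Total cardinal utility (rule `R_{|S|}`): a voter gets 1 from project `j` iff the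
chosen cost is nonzero and within her bounds. -/
def cardUtilTotal [Fintype V] [Fintype P] [DecidableEq P] (proj : D → P) (c : D → ℕ)
    (l u : V → P → ℕ) (S : Finset D) : ℕ :=
  ∑ i : V, (univ.filter fun j : P =>
    chosenCost proj c S j ≠ 0 ∧ l i j ≤ chosenCost proj c S j ∧
      chosenCost proj c S j ≤ u i j).card

/-- Total cost utility (rule `R_{c(S)}`). -/
def costUtilTotal [Fintype V] [Fintype P] [DecidableEq P] (proj : D → P) (c : D → ℕ)
    (l u : V → P → ℕ) (S : Finset D) : ℕ :=
  ∑ i : V, ∑ j : P,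
    if l i j ≤ chosenCost proj c S j ∧ chosenCost proj c S j ≤ u i j then
      chosenCost proj c S j else 0

/-- Total cost-capped utility (rule `R_{ĉ(S)}`). -/
def cappedUtilTotal [Fintype V] [Fintype P] [DecidableEq P] (proj : D → P) (c : D → ℕ)
    (l u : V → P → ℕ) (S : Finset D) : ℕ :=
  ∑ i : V, ∑ j : P,
    if chosenCost proj c S j < l i j then 0
    else if chosenCost proj c S j ≤ u i j then chosenCost proj c S j
    else u i j

/-- Total distance disutility (rule `R_{‖·‖}`): distance of the chosen cost to the
interval `[l i j, u i j]`, via truncated subtraction (`max(l-c,0)+max(c-u,0)`). -/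
def disTotal [Fintype V] [Fintype P] [DecidableEq P] (proj : D → P) (c : D → ℕ)
    (l u : V → P → ℕ) (S : Finset D) : ℕ :=
  ∑ i : V, ∑ j : P,
    ((l i j - chosenCost proj c S j) + (chosenCost proj c S j - u i j))

/-- `τ_j`: the set of costs of degrees of project `j` unanimously acceptable to all voters. -/
def tauSet [Fintype V] [Fintype D] [DecidableEq P] (proj : D → P) (c : D → ℕ)
    (l u : V → P → ℕ) (j : P) : Finset ℕ :=
  ((univ : Finset D).filter fun d => proj d = j ∧ ∀ i : V, l i j ≤ c d ∧ c d ≤ u i j).image c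

/-- Disutility contribution `q(d)` of a degree `d`. -/
def qContrib [Fintype V] (proj : D → P) (c : D → ℕ) (l u : V → P → ℕ) (d : D) : ℕ :=
  (∑ i ∈ univ.filter (fun i : V => c d < l i (proj d)), (l i (proj d) - c d))
  + ∑ i ∈ univ.filter (fun i : V => u i (proj d) < c d), (c d - u i (proj d))

end PBDefs

/-- the rule `R_{|S|}` is shrink-resistant. -/
theorem shrink_resistant_cardUtil
    {V D P : Type*} [Fintype V] [Fintype P] [DecidableEq P]
    (proj : D → P) (c : D → ℕ) (b : ℕ) (l u l' u' : V → P → ℕ)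
    (hlu : ∀ i j, l i j ≤ u i j) (hl'u' : ∀ i j, l' i j ≤ u' i j)
    (S : Finset D) (hS : ValidSet proj c b S)
    (hopt : ∀ T, ValidSet proj c b T →
      cardUtilTotal proj c l u T ≤ cardUtilTotal proj c l u S)
    (i₀ : V) (j₀ : P)
    (hsame : ∀ i j, ¬(i = i₀ ∧ j = j₀) → l' i j = l i j ∧ u' i j = u i j)
    (hl : l i₀ j₀ ≤ l' i₀ j₀) (hu : u' i₀ j₀ ≤ u i₀ j₀)
    (hcontain : l i₀ j₀ ≤ chosenCost proj c S j₀ → chosenCost proj c S j₀ ≤ u i₀ j₀ →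
      l' i₀ j₀ ≤ chosenCost proj c S j₀ ∧ chosenCost proj c S j₀ ≤ u' i₀ j₀) :
    ∀ T, ValidSet proj c b T →
      cardUtilTotal proj c l' u' T ≤ cardUtilTotal proj c l' u' S := by
  have hmono : ∀ X : Finset D, cardUtilTotal proj c l' u' X ≤ cardUtilTotal proj c l u X := by
    intro X
    apply Finset.sum_le_sum
    intro i _
    apply Finset.card_le_card
    intro j hj
    rw [Finset.mem_filter] at hj ⊢
    refine ⟨hj.1, ?_⟩
    have hj := hj.2
    by_cases h : i = i₀ ∧ j = j₀
    · obtain ⟨rfl, rfl⟩ := h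
      exact ⟨hj.1, le_trans hl hj.2.1, le_trans hj.2.2 hu⟩
    · obtain ⟨h1, h2⟩ := hsame i j h
      rw [h1, h2] at hj
      exact hj
  have hSeq : cardUtilTotal proj c l' u' S = cardUtilTotal proj c l u S := by
    apply Finset.sum_congr rfl
    intro i _
    congr 1
    apply Finset.filter_congr
    intro j _
    by_cases h : i = i₀ ∧ j = j₀
    · obtain ⟨rfl, rfl⟩ := h
      constructor
      · rintro ⟨hne, h1, h2⟩
        exact ⟨hne, le_trans hl h1, le_trans h2 hu⟩
      · rintro ⟨hne, h1, h2⟩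
        obtain ⟨h1', h2'⟩ := hcontain h1 h2
        exact ⟨hne, h1', h2'⟩
    · obtain ⟨h1, h2⟩ := hsame i j h
      rw [h1, h2]
  intro T hT
  calc cardUtilTotal proj c l' u' T ≤ cardUtilTotal proj c l u T := hmono T
    _ ≤ cardUtilTotal proj c l u S := hopt T hT
    _ = cardUtilTotal proj c l' u' S := hSeq.symm
end

section
/- With the distance-disutility rule R_{‖·‖} where voter i's disutility from project j in valid set S is max(l_i(j) − c_j(S), 0) + max(c_j(S) − u_i(j), 0) (equivalently: l_i(j) − c_j(S) if c_j(S) < l_i(j); 0 if l_i(j) ≤ c_j(S) ≤ u_i(j); c_j(S) − u_i(j) otherwise), any valid set S minimizing total disutility remains a minimizer after any single voter's interval [l_i(j), u_i(j)] for any project j is shrunk toward the chosen cost c_j(S) (replaced by a subinterval still containing c_j(S) whenever it originally contained c_j(S), with endpoints weakly moved toward c_j(S)). -/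
open Finset

private lemma shrink_key (l u l' u' x : ℕ) (hlu : l ≤ u) (hl'u' : l' ≤ u')
    (hl : l ≤ l') (hu : u' ≤ u)
    (hcontain : l ≤ x → x ≤ u → l' ≤ x ∧ x ≤ u')
    (hlt : |(l' : ℤ) - x| ≤ |(l : ℤ) - x|)
    (hut : |(u' : ℤ) - x| ≤ |(u : ℤ) - x|) :
    (l' - x) + (x - u') = (l - x) + (x - u) := by
  rw [abs_le] at hlt hut
  rcases abs_cases ((l : ℤ) - x) with ⟨h1, _⟩ | ⟨h1, _⟩ <;>
    rcases abs_cases ((u : ℤ) - x) with ⟨h2, _⟩ | ⟨h2, _⟩ <;>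
    [skip; skip; skip; skip] <;>
  · rw [h1] at hlt; rw [h2] at hut
    by_cases hc : l ≤ x ∧ x ≤ u
    · obtain ⟨h3, h4⟩ := hcontain hc.1 hc.2
      omega
    · omega

/-- the rule `R_{‖·‖}` is shrink-resistant. -/
theorem shrink_resistant_disUtil
    {V D P : Type*} [Fintype V] [Fintype P] [DecidableEq P]
    (proj : D → P) (c : D → ℕ) (b : ℕ) (l u l' u' : V → P → ℕ)
    (hlu : ∀ i j, l i j ≤ u i j) (hl'u' : ∀ i j, l' i j ≤ u' i j)
    (S : Finset D) (hS : ValidSet proj c b S)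
    (hopt : ∀ T, ValidSet proj c b T →
      disTotal proj c l u S ≤ disTotal proj c l u T)
    (i₀ : V) (j₀ : P)
    (hsame : ∀ i j, ¬(i = i₀ ∧ j = j₀) → l' i j = l i j ∧ u' i j = u i j)
    -- subinterval:
    (hl : l i₀ j₀ ≤ l' i₀ j₀) (hu : u' i₀ j₀ ≤ u i₀ j₀)
    -- still contains the chosen cost if the old interval did:
    (hcontain : l i₀ j₀ ≤ chosenCost proj c S j₀ → chosenCost proj c S j₀ ≤ u i₀ j₀ →
      l' i₀ j₀ ≤ chosenCost proj c S j₀ ∧ chosenCost proj c S j₀ ≤ u' i₀ j₀)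
    -- endpoints weakly moved toward the chosen cost:
    (hltoward : |(l' i₀ j₀ : ℤ) - (chosenCost proj c S j₀ : ℤ)|
        ≤ |(l i₀ j₀ : ℤ) - (chosenCost proj c S j₀ : ℤ)|)
    (hutoward : |(u' i₀ j₀ : ℤ) - (chosenCost proj c S j₀ : ℤ)|
        ≤ |(u i₀ j₀ : ℤ) - (chosenCost proj c S j₀ : ℤ)|) :
    ∀ T, ValidSet proj c b T →
      disTotal proj c l' u' S ≤ disTotal proj c l' u' T := by
  have hSeq : disTotal proj c l' u' S = disTotal proj c l u S := by
    unfold disTotal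
    refine Finset.sum_congr rfl fun i _ => Finset.sum_congr rfl fun j _ => ?_
    by_cases h : i = i₀ ∧ j = j₀
    · obtain ⟨rfl, rfl⟩ := h
      exact shrink_key _ _ _ _ _ (hlu i j) (hl'u' i j) hl hu hcontain hltoward hutoward
    · obtain ⟨h1, h2⟩ := hsame i j h
      rw [h1, h2]
  have hTle : ∀ T, disTotal proj c l u T ≤ disTotal proj c l' u' T := by
    intro T
    unfold disTotal
    refine Finset.sum_le_sum fun i _ => Finset.sum_le_sum fun j _ => ?_
    by_cases h : i = i₀ ∧ j = j₀
    · obtain ⟨rfl, rfl⟩ := h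
      omega
    · obtain ⟨h1, h2⟩ := hsame i j h
      rw [h1, h2]
  intro T hT
  calc disTotal proj c l' u' S = disTotal proj c l u S := hSeq
    _ ≤ disTotal proj c l u T := hopt T hT
    _ ≤ disTotal proj c l' u' T := hTle T
end

section
/- The distance-disutility rule R_{‖·‖} is range-abiding: for any instance, any project j with τ_j = { c(d) : d ∈ D_j, ∀i, l_i(j) ≤ c(d) ≤ u_i(j) } nonempty, and any valid set S minimizing total distance disutility, the chosen cost satisfies c_j(S) ≤ max(τ_j). (If c_j(S) > max(τ_j), replacing the chosen degree of j by a degree with unanimously acceptable cost max(τ_j) yields a valid set with zero disutility from project j, strictly improving the objective.) -/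
open Finset

theorem mem_tauSet_iff {V D P : Type*} [Fintype V] [Fintype D] [DecidableEq P]
    (proj : D → P) (c : D → ℕ) (l u : V → P → ℕ) (j : P) (x : ℕ) :
    x ∈ tauSet proj c l u j ↔
      ∃ d, proj d = j ∧ (∀ i : V, l i j ≤ c d ∧ c d ≤ u i j) ∧ c d = x := by
  simp [tauSet, and_assoc]

/-- the rule `R_{‖·‖}` is range-abiding. -/
theorem range_abiding_disUtil
    {V D P : Type*} [Fintype V] [Fintype D] [Fintype P] [DecidableEq P]
    (proj : D → P) (c : D → ℕ) (b : ℕ) (l u : V → P → ℕ)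
    (hlu : ∀ i j, l i j ≤ u i j)
    (j : P) (hne : (tauSet proj c l u j).Nonempty)
    (S : Finset D) (hS : ValidSet proj c b S)
    (hopt : ∀ T, ValidSet proj c b T →
      disTotal proj c l u S ≤ disTotal proj c l u T) :
    chosenCost proj c S j ≤ (tauSet proj c l u j).max' hne := by
  classical
  by_contra hgt
  push_neg at hgt
  set m := (tauSet proj c l u j).max' hne with hmdef
  obtain ⟨d₀, hpj, hok, hcd₀⟩ :=
    (mem_tauSet_iff proj c l u j _).mp ((tauSet proj c l u j).max'_mem hne)
  rw [← hmdef] at hcd₀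
  obtain ⟨hcard, hbud⟩ := hS
  obtain ⟨dS, hdS⟩ := card_eq_one.mp (hcard j)
  have hcc : chosenCost proj c S j = c dS := by
    rw [chosenCost, hdS, sum_singleton]
  have hdSmem' : dS ∈ S.filter fun d => proj d = j := hdS ▸ mem_singleton_self dS
  have hdSmem : dS ∈ S := (mem_filter.mp hdSmem').1
  have hpdS : proj dS = j := (mem_filter.mp hdSmem').2
  rw [hcc] at hgt
  have hne' : d₀ ≠ dS := by
    intro h; rw [h] at hcd₀; omega
  have hd₀S : d₀ ∉ S := fun h => hne' (mem_singleton.mp (hdS ▸ mem_filter.mpr ⟨h, hpj⟩))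
  set T := insert d₀ (S.erase dS) with hT
  have hd₀T : d₀ ∉ S.erase dS := fun h => hd₀S (mem_of_mem_erase h)
  have hfj : T.filter (fun d => proj d = j) = {d₀} := by
    rw [hT, filter_insert, if_pos hpj, filter_erase, hdS, erase_singleton]
    rfl
  have hfk : ∀ k, k ≠ j → T.filter (fun d => proj d = k) = S.filter (fun d => proj d = k) := by
    intro k hk
    rw [hT, filter_insert, if_neg (fun h => hk (hpj.symm.trans h).symm), filter_erase,
      erase_eq_of_notMem]
    intro h
    exact hk (hpdS.symm.trans (mem_filter.mp h).2).symm
  have hTvalid : ValidSet proj c b T := by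
    constructor
    · intro k
      by_cases hk : k = j
      · subst hk; rw [hfj]; exact card_singleton d₀
      · rw [hfk k hk]; exact hcard k
    · rw [hT, sum_insert hd₀T]
      have h1 : c dS + ∑ d ∈ S.erase dS, c d = ∑ d ∈ S, c d :=
        Finset.add_sum_erase S c hdSmem
      omega
  have eTj : chosenCost proj c T j = m := by
    rw [chosenCost, hfj, sum_singleton, hcd₀]
  have eTk : ∀ k, k ≠ j → chosenCost proj c T k = chosenCost proj c S k := by
    intro k hk; rw [chosenCost, hfk k hk, chosenCost]
  obtain ⟨i₀, hi₀⟩ : ∃ i, u i j < c dS := by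
    by_contra h
    push_neg at h
    have hmem2 : c dS ∈ tauSet proj c l u j :=
      (mem_tauSet_iff proj c l u j _).mpr
        ⟨dS, hpdS, fun i => ⟨le_trans (le_trans (hok i).1 (le_of_eq hcd₀)) hgt.le, h i⟩, rfl⟩
    exact absurd (le_max' _ _ hmem2) (not_le.mpr hgt)
  have hdis : ∀ X : Finset D, disTotal proj c l u X =
      ∑ k : P, ∑ i : V, ((l i k - chosenCost proj c X k) + (chosenCost proj c X k - u i k)) :=
    fun X => Finset.sum_comm
  have hle := hopt T hTvalid
  rw [hdis S, hdis T, ← Finset.add_sum_erase univ _ (mem_univ j),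
    ← Finset.add_sum_erase univ
      (fun k => ∑ i : V, ((l i k - chosenCost proj c T k) + (chosenCost proj c T k - u i k)))
      (mem_univ j)] at hle
  have herase :
      ∑ k ∈ univ.erase j, ∑ i : V, ((l i k - chosenCost proj c T k) + (chosenCost proj c T k - u i k))
      = ∑ k ∈ univ.erase j, ∑ i : V, ((l i k - chosenCost proj c S k) + (chosenCost proj c S k - u i k)) :=
    sum_congr rfl fun k hk => by rw [eTk k (ne_of_mem_erase hk)]
  rw [herase] at hle
  have hzero : ∑ i : V, ((l i j - chosenCost proj c T j) + (chosenCost proj c T j - u i j)) = 0 := by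
    rw [eTj]
    apply sum_eq_zero
    intro i _
    have h1 := (hok i).1
    have h2 := (hok i).2
    omega
  have hpos : 0 < ∑ i : V, ((l i j - chosenCost proj c S j) + (chosenCost proj c S j - u i j)) := by
    have hterm : 0 < (l i₀ j - chosenCost proj c S j) + (chosenCost proj c S j - u i₀ j) := by
      rw [hcc]; omega
    exact lt_of_lt_of_le hterm
      (Finset.single_le_sum
        (f := fun i => (l i j - chosenCost proj c S j) + (chosenCost proj c S j - u i j))
        (fun i _ => Nat.zero_le _) (mem_univ i₀))
  omega
end

section
/- The cost-utility rule R_{c(S)} is not range-abiding: there exists an instance (a single project j with two nonzero-cost degrees of costs ⌊(b−1)/n⌋ and b, all n voters setting lower bound ⌊(b−1)/n⌋, one voter setting upper bound b and the other n−1 voters setting upper bound ⌊(b−1)/n⌋) in which τ_j = {⌊(b−1)/n⌋} is nonempty, yet the valid set selecting the degree of cost b achieves total utility b > n·⌊(b−1)/n⌋, so the unique optimal set chooses a cost strictly exceeding max(τ_j). -/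
/-! With a single project a valid set is one degree `d`, whose utility is `c d` times the number
of voters accepting `c d`, hence at most `n · c d`. The degrees of cost `0` and `⌊(b-1)/n⌋` thus
earn at most `n⌊(b-1)/n⌋ < b`, while the degree of cost `b` is accepted by `i₀` alone and earns `b`.
Any voter other than `i₀` accepts only the cost `⌊(b-1)/n⌋`, so `τ_j = {⌊(b-1)/n⌋}` once `n ≥ 2`. -/

open Finset

section SingleProject

variable {V D : Type*} (proj : D → Unit) (c : D → ℕ)

theorem chosenCost_unit (S : Finset D) (j : Unit) : chosenCost proj c S j = ∑ d ∈ S, c d := by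
  rw [chosenCost, filter_true_of_mem fun _ _ => Subsingleton.elim _ _]

theorem validSet_unit_iff {b : ℕ} {S : Finset D} :
    ValidSet proj c b S ↔ ∃ d, S = {d} ∧ c d ≤ b := by
  simp only [ValidSet, filter_true, forall_const, card_eq_one]
  constructor
  · rintro ⟨⟨d, rfl⟩, hb⟩
    exact ⟨d, rfl, by simpa using hb⟩
  · rintro ⟨d, rfl, hb⟩
    exact ⟨⟨d, rfl⟩, by simpa using hb⟩

variable [Fintype V] (l u : V → Unit → ℕ)

theorem costUtilTotal_unit_singleton (d : D) :
    costUtilTotal proj c l u {d} = #{i | l i () ≤ c d ∧ c d ≤ u i ()} * c d := by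
  simp only [costUtilTotal, Fintype.sum_unique, chosenCost_unit, sum_singleton]
  rw [← sum_filter, sum_const, smul_eq_mul]

theorem costUtilTotal_unit_singleton_le (d : D) :
    costUtilTotal proj c l u {d} ≤ Fintype.card V * c d := by
  rw [costUtilTotal_unit_singleton]
  exact Nat.mul_le_mul_right _ (card_le_univ _)

end SingleProject

section Tau

variable {V D P : Type*} [Fintype V] [Fintype D] [DecidableEq P]
  {proj : D → P} {c : D → ℕ} {l u : V → P → ℕ} {j : P}

theorem bounds_of_mem_tauSet {x : ℕ} (hx : x ∈ tauSet proj c l u j) (i : V) :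
    l i j ≤ x ∧ x ≤ u i j := by
  obtain ⟨d, hd, rfl⟩ := mem_image.mp hx
  exact (mem_filter.mp hd).2.2 i

theorem mem_tauSet_of_forall {d : D} (hd : proj d = j) (h : ∀ i, l i j ≤ c d ∧ c d ≤ u i j) :
    c d ∈ tauSet proj c l u j :=
  mem_image_of_mem c (mem_filter.mpr ⟨mem_univ d, hd, h⟩)

end Tau

theorem Nat.mul_div_sub_one_lt {b : ℕ} (hb : 1 ≤ b) (n : ℕ) : n * ((b - 1) / n) < b := by
  have := Nat.mul_div_le (b - 1) n
  omega

structure CostUtilCounterexample (n b : ℕ) (c : Fin 3 → ℕ) (l u : Fin n → Unit → ℕ) (i₀ : Fin n) :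
    Prop where
  cost_zero : c 0 = 0
  cost_one : c 1 = (b - 1) / n
  cost_two : c 2 = b
  lower : ∀ i, l i () = (b - 1) / n
  upper_self : u i₀ () = b
  upper_ne : ∀ i, i ≠ i₀ → u i () = (b - 1) / n

namespace CostUtilCounterexample

variable {n b : ℕ} {proj : Fin 3 → Unit} {c : Fin 3 → ℕ} {l u : Fin n → Unit → ℕ} {i₀ : Fin n}

theorem tauSet_eq (h : CostUtilCounterexample n b c l u i₀) (hn : 2 ≤ n) :
    tauSet proj c l u () = {(b - 1) / n} := by
  have : Nontrivial (Fin n) := Fin.nontrivial_iff_two_le.mpr hn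
  obtain ⟨i₁, hi₁⟩ := exists_ne i₀
  refine eq_singleton_iff_unique_mem.mpr ⟨?_, fun x hx => ?_⟩
  · rw [← h.cost_one]
    refine mem_tauSet_of_forall rfl fun i => ⟨by rw [h.lower, h.cost_one], ?_⟩
    by_cases hi : i = i₀
    · rw [hi, h.upper_self, h.cost_one]
      exact (Nat.div_le_self _ _).trans (Nat.sub_le _ _)
    · rw [h.upper_ne i hi, h.cost_one]
  · have := bounds_of_mem_tauSet hx i₁
    rw [h.lower, h.upper_ne i₁ hi₁] at this
    omega

theorem costUtilTotal_two (h : CostUtilCounterexample n b c l u i₀) (hb : 1 ≤ b) :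
    costUtilTotal proj c l u {2} = b := by
  have : (b - 1) / n < b := (Nat.div_le_self _ _).trans_lt (by omega)
  have hacc : ({i | l i () ≤ c 2 ∧ c 2 ≤ u i ()} : Finset (Fin n)) = {i₀} := by
    ext i
    by_cases hi : i = i₀
    · simp [hi, h.lower, h.upper_self, h.cost_two, this.le]
    · simp [hi, h.lower, h.upper_ne i hi, h.cost_two, this]
  rw [costUtilTotal_unit_singleton, hacc, card_singleton, one_mul, h.cost_two]

theorem validSet_two (h : CostUtilCounterexample n b c l u i₀) : ValidSet proj c b {2} :=
  (validSet_unit_iff proj c).mpr ⟨2, rfl, h.cost_two.le⟩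

theorem chosenCost_eq_of_optimal (h : CostUtilCounterexample n b c l u i₀) (hb : 1 ≤ b)
    {S : Finset (Fin 3)} (hS : ValidSet proj c b S)
    (hopt : ∀ T, ValidSet proj c b T → costUtilTotal proj c l u T ≤ costUtilTotal proj c l u S) :
    chosenCost proj c S () = b := by
  obtain ⟨d, rfl, -⟩ := (validSet_unit_iff proj c).mp hS
  have hle := (h.costUtilTotal_two hb).symm.trans_le (hopt _ h.validSet_two)
  rw [chosenCost_unit, sum_singleton]
  have hcheap : d ≠ 2 → c d ≤ (b - 1) / n := by
    fin_cases d <;> simp [h.cost_zero, h.cost_one]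
  by_cases hd : d = 2
  · rw [hd, h.cost_two]
  · have := (costUtilTotal_unit_singleton_le proj c l u d).trans
      (Nat.mul_le_mul_left _ (hcheap hd))
    rw [Fintype.card_fin] at this
    have := Nat.mul_div_sub_one_lt hb n
    omega

end CostUtilCounterexample

/-- the rule `R_{c(S)}` is not range-abiding. -/
theorem not_range_abiding_costUtil :
    ∃ (n b : ℕ), 1 ≤ n ∧ 1 ≤ b ∧
      ∀ (proj : Fin 3 → Unit) (c : Fin 3 → ℕ) (l u : Fin n → Unit → ℕ) (i₀ : Fin n),
        c 0 = 0 → c 1 = (b - 1) / n → c 2 = b →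
        (∀ i, l i () = (b - 1) / n) →
        u i₀ () = b → (∀ i, i ≠ i₀ → u i () = (b - 1) / n) →
        tauSet proj c l u () = {(b - 1) / n} ∧
        costUtilTotal proj c l u ({2} : Finset (Fin 3)) = b ∧
        n * ((b - 1) / n) < b ∧
        ValidSet proj c b ({2} : Finset (Fin 3)) ∧
        ∀ S : Finset (Fin 3), ValidSet proj c b S →
          (∀ T, ValidSet proj c b T →
            costUtilTotal proj c l u T ≤ costUtilTotal proj c l u S) →
          ∀ x ∈ tauSet proj c l u (), x < chosenCost proj c S () := by
  refine ⟨2, 3, by norm_num, by norm_num, fun proj c l u i₀ hc0 hc1 hc2 hl hu₀ hu => ?_⟩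
  have h : CostUtilCounterexample 2 3 c l u i₀ := ⟨hc0, hc1, hc2, hl, hu₀, hu⟩
  have htau := h.tauSet_eq (proj := proj) le_rfl
  refine ⟨htau, h.costUtilTotal_two (by norm_num), Nat.mul_div_sub_one_lt (by norm_num) 2,
    h.validSet_two, fun S hS hopt x hx => ?_⟩
  rw [htau, mem_singleton] at hx
  rw [h.chosenCost_eq_of_optimal (by norm_num) hS hopt, hx]
  norm_num
end

section
/- The rule R_{|S|} is range-unanimous: for any instance in which for every project j the set τ_j = { c(d) : d ∈ D_j, ∀i, l_i(j) ≤ c(d) ≤ u_i(j) } is nonempty and ∑_{j∈P} max(τ_j) ≤ b, the set S* choosing for each project the degree of cost max(τ_j) is optimal under R_{|S|}; indeed S* achieves the maximum possible total utility m·n (assuming all max(τ_j) > 0), hence is selected. -/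
open Finset

/-- the rule `R_{|S|}` is range-unanimous. -/
theorem range_unanimous_cardUtil
    {V D P : Type*} [Fintype V] [Fintype D] [Fintype P] [DecidableEq P]
    (proj : D → P) (c : D → ℕ) (b : ℕ) (l u : V → P → ℕ)
    (hlu : ∀ i j, l i j ≤ u i j)
    (hne : ∀ j : P, (tauSet proj c l u j).Nonempty)
    (hbud : ∑ j : P, (tauSet proj c l u j).max' (hne j) ≤ b)
    (hpos : ∀ j : P, 0 < (tauSet proj c l u j).max' (hne j)) :
    ∃ S : Finset D,
      (∀ j : P, (S.filter fun d => proj d = j).card = 1) ∧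
      (∀ j : P, chosenCost proj c S j = (tauSet proj c l u j).max' (hne j)) ∧
      ValidSet proj c b S ∧
      cardUtilTotal proj c l u S = Fintype.card P * Fintype.card V ∧
      ∀ T, ValidSet proj c b T →
        cardUtilTotal proj c l u T ≤ cardUtilTotal proj c l u S := by
  classical
  have hd : ∀ j : P, ∃ d : D, proj d = j ∧ (∀ i, l i j ≤ c d ∧ c d ≤ u i j) ∧
      c d = (tauSet proj c l u j).max' (hne j) := by
    intro j
    have hm := (tauSet proj c l u j).max'_mem (hne j)
    simp only [tauSet, mem_image, mem_filter, mem_univ, true_and] at hm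
    obtain ⟨d, ⟨h1, h2⟩, h3⟩ := hm
    exact ⟨d, h1, by simpa [h1] using h2, h3⟩
  choose f hf1 hf2 hf3 using hd
  set S : Finset D := Finset.image f univ with hS
  have hfilter : ∀ j : P, S.filter (fun d => proj d = j) = {f j} := by
    intro j
    ext d
    simp only [hS, mem_filter, mem_image, mem_univ, true_and, mem_singleton]
    constructor
    · rintro ⟨⟨j', rfl⟩, h⟩
      rw [hf1] at h; rw [h]
    · rintro rfl
      exact ⟨⟨j, rfl⟩, hf1 j⟩
  have hcard : ∀ j : P, (S.filter fun d => proj d = j).card = 1 := by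
    intro j; rw [hfilter]; simp
  have hcost : ∀ j : P, chosenCost proj c S j = (tauSet proj c l u j).max' (hne j) := by
    intro j; rw [chosenCost, hfilter, sum_singleton, hf3]
  have hbudS : ∑ d ∈ S, c d ≤ b := by
    have : ∑ d ∈ S, c d = ∑ j : P, chosenCost proj c S j := by
      simp only [chosenCost]
      exact (Finset.sum_fiberwise S proj c).symm
    rw [this]
    calc ∑ j : P, chosenCost proj c S j
        = ∑ j : P, (tauSet proj c l u j).max' (hne j) := by
          exact Finset.sum_congr rfl fun j _ => hcost j
      _ ≤ b := hbud
  have hvalid : ValidSet proj c b S := ⟨hcard, hbudS⟩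
  have hfull : cardUtilTotal proj c l u S = Fintype.card P * Fintype.card V := by
    rw [cardUtilTotal]
    have : ∀ i : V, (univ.filter fun j : P =>
        chosenCost proj c S j ≠ 0 ∧ l i j ≤ chosenCost proj c S j ∧
        chosenCost proj c S j ≤ u i j).card = Fintype.card P := by
      intro i
      rw [Finset.filter_true_of_mem, Finset.card_univ]
      intro j _
      refine ⟨?_, ?_, ?_⟩
      · rw [hcost]; exact (hpos j).ne'
      · rw [hcost, ← hf3]; exact (hf2 j i).1
      · rw [hcost, ← hf3]; exact (hf2 j i).2
    simp only [this, Finset.sum_const, Finset.card_univ, smul_eq_mul, mul_comm]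
  refine ⟨S, hcard, hcost, hvalid, hfull, ?_⟩
  intro T _
  rw [hfull, cardUtilTotal]
  calc ∑ i : V, (univ.filter fun j : P =>
        chosenCost proj c T j ≠ 0 ∧ l i j ≤ chosenCost proj c T j ∧
        chosenCost proj c T j ≤ u i j).card
      ≤ ∑ _i : V, Fintype.card P := by
        refine Finset.sum_le_sum fun i _ => ?_
        exact le_trans (Finset.card_filter_le _ _) (le_of_eq (Finset.card_univ))
    _ = Fintype.card P * Fintype.card V := by
        simp [Finset.sum_const, Finset.card_univ, mul_comm]
end

section
/- The rule R_{‖·‖} is range-unanimous: if for every project j the unanimously acceptable cost set τ_j is nonempty and ∑_j max(τ_j) ≤ b, then the set S* choosing for each project j the degree of cost max(τ_j) achieves total distance disutility 0, which is optimal, and hence S* is selected by R_{‖·‖}; moreover any selected set must also have total disutility 0. -/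
open Finset

/-- the rule `R_{‖·‖}` is range-unanimous. -/
theorem range_unanimous_disUtil
    {V D P : Type*} [Fintype V] [Fintype D] [Fintype P] [DecidableEq P]
    (proj : D → P) (c : D → ℕ) (b : ℕ) (l u : V → P → ℕ)
    (hlu : ∀ i j, l i j ≤ u i j)
    (hne : ∀ j : P, (tauSet proj c l u j).Nonempty)
    (hbud : ∑ j : P, (tauSet proj c l u j).max' (hne j) ≤ b) :
    (∃ S : Finset D,
      (∀ j : P, (S.filter fun d => proj d = j).card = 1) ∧
      (∀ j : P, chosenCost proj c S j = (tauSet proj c l u j).max' (hne j)) ∧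
      ValidSet proj c b S ∧
      disTotal proj c l u S = 0 ∧
      ∀ T, ValidSet proj c b T → disTotal proj c l u S ≤ disTotal proj c l u T) ∧
    ∀ T, ValidSet proj c b T →
      (∀ T', ValidSet proj c b T' → disTotal proj c l u T ≤ disTotal proj c l u T') →
      disTotal proj c l u T = 0 := by
  classical
  have hch : ∀ j : P, ∃ d : D, proj d = j ∧ (∀ i : V, l i j ≤ c d ∧ c d ≤ u i j) ∧
      c d = (tauSet proj c l u j).max' (hne j) := by
    intro j
    have hmem := (tauSet proj c l u j).max'_mem (hne j)
    simp only [tauSet, mem_image, mem_filter, mem_univ, true_and] at hmem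
    obtain ⟨d, ⟨hpd, hall⟩, hc⟩ := hmem
    exact ⟨d, hpd, hall, hc⟩
  choose f hf1 hf2 hf3 using hch
  have hfinj : Function.Injective f := fun a b h => by
    rw [← hf1 a, ← hf1 b, h]
  set S := (univ : Finset P).image f with hS
  have hfilter : ∀ j, S.filter (fun d => proj d = j) = {f j} := by
    intro j
    ext d
    simp only [hS, mem_filter, mem_image, mem_univ, true_and, mem_singleton]
    constructor
    · rintro ⟨⟨j', rfl⟩, hpj⟩
      rw [hf1 j'] at hpj; subst hpj; rfl
    · rintro rfl; exact ⟨⟨j, rfl⟩, hf1 j⟩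
  have hcard : ∀ j, (S.filter fun d => proj d = j).card = 1 := fun j => by
    rw [hfilter j]; simp
  have hcost : ∀ j, chosenCost proj c S j = (tauSet proj c l u j).max' (hne j) := fun j => by
    rw [chosenCost, hfilter j, sum_singleton, hf3]
  have hsum : ∑ d ∈ S, c d ≤ b := by
    rw [hS, sum_image (fun a _ b _ h => hfinj h)]
    calc ∑ j : P, c (f j) = ∑ j : P, (tauSet proj c l u j).max' (hne j) :=
          Finset.sum_congr rfl fun j _ => hf3 j
      _ ≤ b := hbud
  have hvalid : ValidSet proj c b S := ⟨hcard, hsum⟩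
  have hdis : disTotal proj c l u S = 0 := by
    rw [disTotal]
    apply Finset.sum_eq_zero
    intro i _
    apply Finset.sum_eq_zero
    intro j _
    have h1 : l i j ≤ chosenCost proj c S j := by
      rw [hcost j, ← hf3 j]; exact (hf2 j i).1
    have h2 : chosenCost proj c S j ≤ u i j := by
      rw [hcost j, ← hf3 j]; exact (hf2 j i).2
    rw [Nat.sub_eq_zero_of_le h1, Nat.sub_eq_zero_of_le h2]
    rfl
  refine ⟨⟨S, hcard, hcost, hvalid, hdis, fun T _ => by simp [hdis]⟩, ?_⟩
  intro T _ hopt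
  have := hopt S hvalid
  omega
end

section
/- The rules R_{|S|}, R_{c(S)}, and R_{‖·‖} are upper-bound-sensitive: for any instance, any project j, and any two valid sets S, S' that agree on all projects other than j, if every voter i satisfies c_j(S) > c_j(S') > u_i(j), then S is not selected by the rule. (For R_{|S|} and R_{c(S)}, S and S' have equal total utility from j, namely 0, but S costs more; for R_{‖·‖}, S has strictly larger total disutility than S'.) -/
open Finset

/-- `R_{|S|}`, `R_{c(S)}` and `R_{‖·‖}` are upper-bound-sensitive. -/
theorem upper_bound_sensitive
    {V D P : Type*} [Fintype V] [Nonempty V] [Fintype P] [DecidableEq P]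
    (proj : D → P) (c : D → ℕ) (b : ℕ) (l u : V → P → ℕ)
    (hlu : ∀ i j, l i j ≤ u i j)
    (j₀ : P) (S S' : Finset D)
    (hS : ValidSet proj c b S) (hS' : ValidSet proj c b S')
    (hagree : ∀ j : P, j ≠ j₀ →
      S.filter (fun d => proj d = j) = S'.filter (fun d => proj d = j))
    (hover : ∀ i : V, u i j₀ < chosenCost proj c S' j₀ ∧
      chosenCost proj c S' j₀ < chosenCost proj c S j₀) :
    cardUtilTotal proj c l u S = cardUtilTotal proj c l u S' ∧
    costUtilTotal proj c l u S = costUtilTotal proj c l u S' ∧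
    disTotal proj c l u S' < disTotal proj c l u S ∧
    ¬ (∀ T, ValidSet proj c b T → disTotal proj c l u S ≤ disTotal proj c l u T) := by
  classical
  have hcc : ∀ j : P, j ≠ j₀ →
      chosenCost proj c S j = chosenCost proj c S' j := by
    intro j hj
    unfold chosenCost
    rw [hagree j hj]
  have hcard : cardUtilTotal proj c l u S = cardUtilTotal proj c l u S' := by
    unfold cardUtilTotal
    refine Finset.sum_congr rfl ?_
    intro i _
    congr 1
    ext j
    simp only [mem_filter, mem_univ, true_and]
    by_cases hj : j = j₀
    · subst hj
      obtain ⟨h1, h2⟩ := hover i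
      constructor
      · rintro ⟨-, -, h⟩; exact absurd h (not_le.mpr (h1.trans h2))
      · rintro ⟨-, -, h⟩; exact absurd h (not_le.mpr h1)
    · rw [hcc j hj]
  have hcost : costUtilTotal proj c l u S = costUtilTotal proj c l u S' := by
    unfold costUtilTotal
    refine Finset.sum_congr rfl ?_
    intro i _
    refine Finset.sum_congr rfl ?_
    intro j _
    by_cases hj : j = j₀
    · subst hj
      obtain ⟨h1, h2⟩ := hover i
      rw [if_neg, if_neg]
      · rintro ⟨-, h⟩; exact absurd h (not_le.mpr h1)
      · rintro ⟨-, h⟩; exact absurd h (not_le.mpr (h1.trans h2))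
    · rw [hcc j hj]
  have hdis : disTotal proj c l u S' < disTotal proj c l u S := by
    unfold disTotal
    have key : ∀ i : V,
        (∑ j : P, ((l i j - chosenCost proj c S' j) + (chosenCost proj c S' j - u i j)))
        < ∑ j : P, ((l i j - chosenCost proj c S j) + (chosenCost proj c S j - u i j)) := by
      intro i
      obtain ⟨h1, h2⟩ := hover i
      refine Finset.sum_lt_sum ?_ ⟨j₀, mem_univ _, ?_⟩
      · intro j _
        by_cases hj : j = j₀
        · subst hj
          have hl' : l i j - chosenCost proj c S' j = 0 :=
            Nat.sub_eq_zero_of_le (le_of_lt (lt_of_le_of_lt (hlu i j) h1))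
          have hl : l i j - chosenCost proj c S j = 0 :=
            Nat.sub_eq_zero_of_le (le_of_lt (lt_of_le_of_lt (hlu i j) (h1.trans h2)))
          rw [hl, hl']
          exact Nat.add_le_add_left (Nat.sub_le_sub_right (le_of_lt h2) _) _
        · rw [hcc j hj]
      · have hl' : l i j₀ - chosenCost proj c S' j₀ = 0 :=
          Nat.sub_eq_zero_of_le (le_of_lt (lt_of_le_of_lt (hlu i j₀) h1))
        have hl : l i j₀ - chosenCost proj c S j₀ = 0 :=
          Nat.sub_eq_zero_of_le (le_of_lt (lt_of_le_of_lt (hlu i j₀) (h1.trans h2)))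
        rw [hl, hl']
        simpa using Nat.sub_lt_sub_right (le_of_lt h1) h2
    obtain ⟨i₀⟩ := (inferInstance : Nonempty V)
    exact Finset.sum_lt_sum (fun i _ => (key i).le) ⟨i₀, mem_univ _, key i₀⟩
  exact ⟨hcard, hcost, hdis, fun h => absurd (h S' hS') (not_le.mpr hdis)⟩
end

section
/- The rule R_{|S|} is not lower-bound-sensitive: there is an instance with two projects, where project 1 has nonzero degrees of costs 1, 2, and b−3, project 2 has one nonzero degree of cost b−2, every voter sets l_i(1) = u_i(1) = b−3 and l_i(2) = u_i(2) = b−2, and the budget is b; then S = {degree of cost 1 for project 1, degree of cost b−2 for project 2} is optimal under R_{|S|} (total utility n), yet S' = {degree of cost 2 for project 1, degree of cost b−2 for project 2} is also valid with c_1(S) = 1 < c_1(S') = 2 < l_i(1) = b−3 for all voters, violating lower-bound sensitivity. -/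
open Finset

lemma sum_split {D : Type*} [Fintype D] [DecidableEq D] (proj : D → Fin 2) (c : D → ℕ)
    (T : Finset D) :
    ∑ d ∈ T, c d = chosenCost proj c T 0 + chosenCost proj c T 1 := by
  have := Finset.sum_fiberwise T proj c
  simp only [Fin.sum_univ_two] at this
  exact this.symm

/-- the rule `R_{|S|}` is not lower-bound-sensitive (counterexample). -/
theorem not_lower_bound_sensitive_cardUtil (n b : ℕ) (hn : 1 ≤ n) (hb : 6 ≤ b)
    (proj : Fin 6 → Fin 2) (c : Fin 6 → ℕ) (l u : Fin n → Fin 2 → ℕ)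
    (hproj : proj 0 = 0 ∧ proj 1 = 0 ∧ proj 2 = 0 ∧ proj 3 = 0 ∧ proj 4 = 1 ∧ proj 5 = 1)
    (hc : c 0 = 0 ∧ c 1 = 1 ∧ c 2 = 2 ∧ c 3 = b - 3 ∧ c 4 = 0 ∧ c 5 = b - 2)
    (hbounds : ∀ i, l i 0 = b - 3 ∧ u i 0 = b - 3 ∧ l i 1 = b - 2 ∧ u i 1 = b - 2) :
    ValidSet proj c b ({1, 5} : Finset (Fin 6)) ∧
    ValidSet proj c b ({2, 5} : Finset (Fin 6)) ∧
    cardUtilTotal proj c l u ({1, 5} : Finset (Fin 6)) = n ∧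
    (∀ T, ValidSet proj c b T →
      cardUtilTotal proj c l u T ≤ cardUtilTotal proj c l u ({1, 5} : Finset (Fin 6))) ∧
    chosenCost proj c ({1, 5} : Finset (Fin 6)) 0 = 1 ∧
    chosenCost proj c ({2, 5} : Finset (Fin 6)) 0 = 2 ∧
    (∀ i : Fin n,
      chosenCost proj c ({1, 5} : Finset (Fin 6)) 0
          < chosenCost proj c ({2, 5} : Finset (Fin 6)) 0 ∧
      chosenCost proj c ({2, 5} : Finset (Fin 6)) 0 < l i 0)  := by
  obtain ⟨hp0, hp1, hp2, hp3, hp4, hp5⟩ := hproj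
  obtain ⟨hc0, hc1, hc2, hc3, hc4, hc5⟩ := hc
  have hne15 : (1 : Fin 6) ≠ 5 := by decide
  have hne25 : (2 : Fin 6) ≠ 5 := by decide
  have hcc15_0 : chosenCost proj c ({1, 5} : Finset (Fin 6)) 0 = 1 := by
    simp [chosenCost, Finset.filter_insert, Finset.filter_singleton, hp1, hp5, hc1]
  have hcc15_1 : chosenCost proj c ({1, 5} : Finset (Fin 6)) 1 = b - 2 := by
    simp [chosenCost, Finset.filter_insert, Finset.filter_singleton, hp1, hp5, hc5]
  have hcc25_0 : chosenCost proj c ({2, 5} : Finset (Fin 6)) 0 = 2 := by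
    simp [chosenCost, Finset.filter_insert, Finset.filter_singleton, hp2, hp5, hc2]
  have hv15 : ValidSet proj c b ({1, 5} : Finset (Fin 6)) := by
    constructor
    · intro j
      fin_cases j <;>
        simp [Finset.filter_insert, Finset.filter_singleton, hp1, hp5]
    · rw [Finset.sum_insert (by simp [hne15]), Finset.sum_singleton, hc1, hc5]
      omega
  have hv25 : ValidSet proj c b ({2, 5} : Finset (Fin 6)) := by
    constructor
    · intro j
      fin_cases j <;>
        simp [Finset.filter_insert, Finset.filter_singleton, hp2, hp5]
    · rw [Finset.sum_insert (by simp [hne25]), Finset.sum_singleton, hc2, hc5]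
      omega
  have hcard15 : cardUtilTotal proj c l u ({1, 5} : Finset (Fin 6)) = n := by
    unfold cardUtilTotal
    have : ∀ i : Fin n, (univ.filter fun j : Fin 2 =>
        chosenCost proj c ({1,5} : Finset (Fin 6)) j ≠ 0 ∧
        l i j ≤ chosenCost proj c ({1,5} : Finset (Fin 6)) j ∧
        chosenCost proj c ({1,5} : Finset (Fin 6)) j ≤ u i j) = {1} := by
      intro i
      obtain ⟨hl0, hu0, hl1, hu1⟩ := hbounds i
      ext j
      fin_cases j <;>
        simp [hcc15_0, hcc15_1, hl0, hu0, hl1, hu1] <;> omega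
    simp [this]
  refine ⟨hv15, hv25, hcard15, ?_, hcc15_0, hcc25_0, ?_⟩
  · intro T hT
    rw [hcard15]
    obtain ⟨hTcard, hTbud⟩ := hT
    calc cardUtilTotal proj c l u T
        ≤ ∑ _i : Fin n, 1 := by
          apply Finset.sum_le_sum
          intro i _
          rw [Finset.card_le_one]
          intro a ha b' hb'
          by_contra hab
          have h01 : chosenCost proj c T 0 = b - 3 ∧ chosenCost proj c T 1 = b - 2 := by
            obtain ⟨hl0, hu0, hl1, hu1⟩ := hbounds i
            have h0 : (0 : Fin 2) ∈ univ.filter fun j : Fin 2 =>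
                chosenCost proj c T j ≠ 0 ∧ l i j ≤ chosenCost proj c T j ∧
                chosenCost proj c T j ≤ u i j := by
              fin_cases a <;> fin_cases b' <;> simp_all
            have h1 : (1 : Fin 2) ∈ univ.filter fun j : Fin 2 =>
                chosenCost proj c T j ≠ 0 ∧ l i j ≤ chosenCost proj c T j ∧
                chosenCost proj c T j ≤ u i j := by
              fin_cases a <;> fin_cases b' <;> simp_all
            simp only [Finset.mem_filter] at h0 h1
            omega
          rw [sum_split proj c T] at hTbud
          omega
      _ = n := by simp
  · intro i
    obtain ⟨hl0, _, _, _⟩ := hbounds i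
    rw [hcc15_0, hcc25_0, hl0]
    omega
end

section
/- The rules R_{c(S)}, R_{ĉ(S)} (cost-capped), and R_{‖·‖} are not discount-proof: in the instance with two projects each having a single nonzero degree of cost 2, budget b = 2, and every voter reporting l_i(j) = u_i(j) = 2 for both projects, the set S selecting only project 1's degree is optimal under each rule; but after decreasing the cost of project 1's chosen degree to 1, S is no longer optimal, since the set selecting only project 2's degree (at cost 2 within voters' bounds) then achieves strictly better objective value for each rule. -/
open Finset

/-- the rules `R_{c(S)}`, `R_{ĉ(S)}` and `R_{‖·‖}` are not discount-proof. -/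
theorem not_discount_proof (n : ℕ) (hn : 1 ≤ n)
    (proj : Fin 4 → Fin 2) (c c' : Fin 4 → ℕ) (l u : Fin n → Fin 2 → ℕ)
    (hproj : proj 0 = 0 ∧ proj 1 = 0 ∧ proj 2 = 1 ∧ proj 3 = 1)
    (hc : c 0 = 0 ∧ c 1 = 2 ∧ c 2 = 0 ∧ c 3 = 2)
    (hbounds : ∀ i j, l i j = 2 ∧ u i j = 2)
    (hc' : ∀ d, c' d = if d = 1 then 1 else c d) :
    -- S = {1, 2} (project 1 funded at cost 2, project 2 unfunded) is optimal
    -- under each of the three rules for budget 2: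
    (∀ T, ValidSet proj c 2 T →
      costUtilTotal proj c l u T ≤ costUtilTotal proj c l u ({1, 2} : Finset (Fin 4))) ∧
    (∀ T, ValidSet proj c 2 T →
      cappedUtilTotal proj c l u T ≤ cappedUtilTotal proj c l u ({1, 2} : Finset (Fin 4))) ∧
    (∀ T, ValidSet proj c 2 T →
      disTotal proj c l u ({1, 2} : Finset (Fin 4)) ≤ disTotal proj c l u T) ∧
    ValidSet proj c 2 ({1, 2} : Finset (Fin 4)) ∧
    -- after discounting the chosen degree of project 1 to cost 1, the set
    -- {0, 3} funding only project 2 is strictly better under each rule: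
    ValidSet proj c' 2 ({0, 3} : Finset (Fin 4)) ∧
    ValidSet proj c' 2 ({1, 2} : Finset (Fin 4)) ∧
    costUtilTotal proj c' l u ({1, 2} : Finset (Fin 4))
        < costUtilTotal proj c' l u ({0, 3} : Finset (Fin 4)) ∧
    cappedUtilTotal proj c' l u ({1, 2} : Finset (Fin 4))
        < cappedUtilTotal proj c' l u ({0, 3} : Finset (Fin 4)) ∧
    disTotal proj c' l u ({0, 3} : Finset (Fin 4))
        < disTotal proj c' l u ({1, 2} : Finset (Fin 4)) := by
  
  obtain ⟨hp0, hp1, hp2, hp3⟩ := hproj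
  obtain ⟨hc0, hc1, hc2, hc3⟩ := hc
  have hc'0 : c' 0 = 0 := by rw [hc' 0]; simp [hc0]
  have hc'1 : c' 1 = 1 := by rw [hc' 1]; simp
  have hc'2 : c' 2 = 0 := by rw [hc' 2]; simp [hc2]
  have hc'3 : c' 3 = 2 := by rw [hc' 3]; simp [hc3]
  -- filters of the two concrete sets
  have f12_0 : ({1, 2} : Finset (Fin 4)).filter (fun d => proj d = 0) = {1} := by
    ext d; fin_cases d <;> simp [hp1, hp2]
  have f12_1 : ({1, 2} : Finset (Fin 4)).filter (fun d => proj d = 1) = {2} := by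
    ext d; fin_cases d <;> simp [hp1, hp2]
  have f03_0 : ({0, 3} : Finset (Fin 4)).filter (fun d => proj d = 0) = {0} := by
    ext d; fin_cases d <;> simp [hp0, hp3]
  have f03_1 : ({0, 3} : Finset (Fin 4)).filter (fun d => proj d = 1) = {3} := by
    ext d; fin_cases d <;> simp [hp0, hp3]
  -- chosen costs
  have cc12_0 : chosenCost proj c ({1, 2} : Finset (Fin 4)) 0 = 2 := by
    simp [chosenCost, f12_0, hc1]
  have cc12_1 : chosenCost proj c ({1, 2} : Finset (Fin 4)) 1 = 0 := by
    simp [chosenCost, f12_1, hc2]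
  have cc12_0' : chosenCost proj c' ({1, 2} : Finset (Fin 4)) 0 = 1 := by
    simp [chosenCost, f12_0, hc'1]
  have cc12_1' : chosenCost proj c' ({1, 2} : Finset (Fin 4)) 1 = 0 := by
    simp [chosenCost, f12_1, hc'2]
  have cc03_0' : chosenCost proj c' ({0, 3} : Finset (Fin 4)) 0 = 0 := by
    simp [chosenCost, f03_0, hc'0]
  have cc03_1' : chosenCost proj c' ({0, 3} : Finset (Fin 4)) 1 = 2 := by
    simp [chosenCost, f03_1, hc'3]
  have hl : ∀ i j, l i j = 2 := fun i j => (hbounds i j).1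
  have hu : ∀ i j, u i j = 2 := fun i j => (hbounds i j).2
  -- key bound: for any valid T, the chosen costs sum to at most 2
  have key : ∀ T : Finset (Fin 4), ValidSet proj c 2 T →
      chosenCost proj c T 0 + chosenCost proj c T 1 ≤ 2 := by
    intro T hT
    have : ∑ j : Fin 2, chosenCost proj c T j = ∑ d ∈ T, c d := by
      unfold chosenCost
      exact Finset.sum_fiberwise_of_maps_to (fun d _ => Finset.mem_univ (proj d)) c
    have h2 := hT.2
    rw [Fin.sum_univ_two] at this
    omega
  have val12 : ValidSet proj c 2 ({1, 2} : Finset (Fin 4)) := by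
    constructor
    · intro j
      fin_cases j
      · show (Finset.filter (fun d => proj d = 0) ({1, 2} : Finset (Fin 4))).card = 1
        rw [f12_0]; rfl
      · show (Finset.filter (fun d => proj d = 1) ({1, 2} : Finset (Fin 4))).card = 1
        rw [f12_1]; rfl
    · simp [Finset.sum_insert, hc1, hc2]
  have val12' : ValidSet proj c' 2 ({1, 2} : Finset (Fin 4)) := by
    constructor
    · intro j
      fin_cases j
      · show (Finset.filter (fun d => proj d = 0) ({1, 2} : Finset (Fin 4))).card = 1
        rw [f12_0]; rfl
      · show (Finset.filter (fun d => proj d = 1) ({1, 2} : Finset (Fin 4))).card = 1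
        rw [f12_1]; rfl
    · simp [Finset.sum_insert, hc'1, hc'2]
  have val03' : ValidSet proj c' 2 ({0, 3} : Finset (Fin 4)) := by
    constructor
    · intro j
      fin_cases j
      · show (Finset.filter (fun d => proj d = 0) ({0, 3} : Finset (Fin 4))).card = 1
        rw [f03_0]; rfl
      · show (Finset.filter (fun d => proj d = 1) ({0, 3} : Finset (Fin 4))).card = 1
        rw [f03_1]; rfl
    · simp [Finset.sum_insert, hc'0, hc'3]
  refine ⟨?_, ?_, ?_, val12, val03', val12', ?_, ?_, ?_⟩
  · -- costUtil optimality
    intro T hT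
    have hk := key T hT
    have hval : costUtilTotal proj c l u ({1, 2} : Finset (Fin 4)) = 2 * n := by
      unfold costUtilTotal
      rw [Finset.sum_congr rfl (fun i _ => ?_), Finset.sum_const, smul_eq_mul,
        Finset.card_univ, Fintype.card_fin, Nat.mul_comm]
      rw [Fin.sum_univ_two, cc12_0, cc12_1, hl, hl, hu, hu]
      simp
    rw [hval]
    unfold costUtilTotal
    calc ∑ i : Fin n, ∑ j : Fin 2, (if l i j ≤ chosenCost proj c T j ∧
          chosenCost proj c T j ≤ u i j then chosenCost proj c T j else 0)
        ≤ ∑ i : Fin n, 2 := by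
          refine Finset.sum_le_sum fun i _ => ?_
          rw [Fin.sum_univ_two]
          have a := hk
          split_ifs <;> omega
      _ = 2 * n := by simp [Nat.mul_comm]
  · -- cappedUtil optimality
    intro T hT
    have hk := key T hT
    have hval : cappedUtilTotal proj c l u ({1, 2} : Finset (Fin 4)) = 2 * n := by
      unfold cappedUtilTotal
      rw [Finset.sum_congr rfl (fun i _ => ?_), Finset.sum_const, smul_eq_mul,
        Finset.card_univ, Fintype.card_fin, Nat.mul_comm]
      rw [Fin.sum_univ_two, cc12_0, cc12_1, hl, hl, hu, hu]
      simp
    rw [hval]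
    unfold cappedUtilTotal
    calc ∑ i : Fin n, ∑ j : Fin 2, (if chosenCost proj c T j < l i j then 0
          else if chosenCost proj c T j ≤ u i j then chosenCost proj c T j else u i j)
        ≤ ∑ i : Fin n, 2 := by
          refine Finset.sum_le_sum fun i _ => ?_
          rw [Fin.sum_univ_two]
          have a := hk
          have h0 := hu i 0
          have h1 := hu i 1
          split_ifs <;> omega
      _ = 2 * n := by simp [Nat.mul_comm]
  · -- disTotal optimality
    intro T hT
    have hk := key T hT
    have hval : disTotal proj c l u ({1, 2} : Finset (Fin 4)) = 2 * n := by
      unfold disTotal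
      rw [Finset.sum_congr rfl (fun i _ => ?_), Finset.sum_const, smul_eq_mul,
        Finset.card_univ, Fintype.card_fin, Nat.mul_comm]
      rw [Fin.sum_univ_two, cc12_0, cc12_1, hl, hl, hu, hu]
    rw [hval]
    unfold disTotal
    calc (2 * n : ℕ) = ∑ _i : Fin n, 2 := by simp [Nat.mul_comm]
      _ ≤ ∑ i : Fin n, ∑ j : Fin 2, ((l i j - chosenCost proj c T j)
            + (chosenCost proj c T j - u i j)) := by
          refine Finset.sum_le_sum fun i _ => ?_
          rw [Fin.sum_univ_two, hl, hl, hu, hu]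
          omega
  · -- costUtil strict
    unfold costUtilTotal
    refine Finset.sum_lt_sum_of_nonempty ⟨⟨0, hn⟩, Finset.mem_univ _⟩ fun i _ => ?_
    rw [Fin.sum_univ_two, Fin.sum_univ_two, cc12_0', cc12_1', cc03_0', cc03_1',
      hl, hl, hu, hu]
    simp
  · unfold cappedUtilTotal
    refine Finset.sum_lt_sum_of_nonempty ⟨⟨0, hn⟩, Finset.mem_univ _⟩ fun i _ => ?_
    rw [Fin.sum_univ_two, Fin.sum_univ_two, cc12_0', cc12_1', cc03_0', cc03_1',
      hl, hl, hu, hu]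
    simp
  · unfold disTotal
    refine Finset.sum_lt_sum_of_nonempty ⟨⟨0, hn⟩, Finset.mem_univ _⟩ fun i _ => ?_
    rw [Fin.sum_univ_two, Fin.sum_univ_two, cc12_0', cc12_1', cc03_0', cc03_1',
      hl, hl, hu, hu]
    omega
end

section
/- The rule R_{ĉ(S)} is not upper-bound-sensitive: in the instance with project 1 having nonzero degrees of costs 1, 2, 3, project 2 having one nonzero degree of cost b−3, budget b, and every voter reporting l_i(1) = u_i(1) = 1 and l_i(2) = u_i(2) = b−3, the set S = {cost-3 degree of project 1, cost-(b−3) degree of project 2} is selected by R_{ĉ(S)} (achieving the maximum total utility n·(1 + (b−3))); yet S' = {cost-2 degree of project 1, cost-(b−3) degree of project 2} is valid with c_1(S) = 3 > c_1(S') = 2 > u_i(1) = 1 for all voters, so upper-bound sensitivity fails. -/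
open Finset

/-- the rule `R_{ĉ(S)}` is not upper-bound-sensitive (counterexample). -/
theorem not_upper_bound_sensitive_cappedUtil (n b : ℕ) (hn : 1 ≤ n) (hb : 6 ≤ b)
    (proj : Fin 6 → Fin 2) (c : Fin 6 → ℕ) (l u : Fin n → Fin 2 → ℕ)
    (hproj : proj 0 = 0 ∧ proj 1 = 0 ∧ proj 2 = 0 ∧ proj 3 = 0 ∧ proj 4 = 1 ∧ proj 5 = 1)
    (hc : c 0 = 0 ∧ c 1 = 1 ∧ c 2 = 2 ∧ c 3 = 3 ∧ c 4 = 0 ∧ c 5 = b - 3)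
    (hbounds : ∀ i, l i 0 = 1 ∧ u i 0 = 1 ∧ l i 1 = b - 3 ∧ u i 1 = b - 3) :
    ValidSet proj c b ({3, 5} : Finset (Fin 6)) ∧
    ValidSet proj c b ({2, 5} : Finset (Fin 6)) ∧
    cappedUtilTotal proj c l u ({3, 5} : Finset (Fin 6)) = n * (1 + (b - 3)) ∧
    (∀ T, ValidSet proj c b T →
      cappedUtilTotal proj c l u T ≤ cappedUtilTotal proj c l u ({3, 5} : Finset (Fin 6))) ∧
    (∀ i : Fin n,
      u i 0 < chosenCost proj c ({2, 5} : Finset (Fin 6)) 0 ∧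
      chosenCost proj c ({2, 5} : Finset (Fin 6)) 0
        < chosenCost proj c ({3, 5} : Finset (Fin 6)) 0) := by
  obtain ⟨hp0, hp1, hp2, hp3, hp4, hp5⟩ := hproj
  obtain ⟨hc0, hc1, hc2, hc3, hc4, hc5⟩ := hc
  have h35_0 : chosenCost proj c ({3, 5} : Finset (Fin 6)) 0 = 3 := by
    simp [chosenCost, Finset.filter_insert, Finset.filter_singleton, hp3, hp5, hc3]
  have h35_1 : chosenCost proj c ({3, 5} : Finset (Fin 6)) 1 = b - 3 := by
    simp [chosenCost, Finset.filter_insert, Finset.filter_singleton, hp3, hp5, hc5]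
  have h25_0 : chosenCost proj c ({2, 5} : Finset (Fin 6)) 0 = 2 := by
    simp [chosenCost, Finset.filter_insert, Finset.filter_singleton, hp2, hp5, hc2]
  have hb3 : 3 ≤ b - 3 := by omega
  have hcap : cappedUtilTotal proj c l u ({3, 5} : Finset (Fin 6)) = n * (1 + (b - 3)) := by
    unfold cappedUtilTotal
    have : ∀ i : Fin n, (∑ j : Fin 2,
        if chosenCost proj c ({3,5} : Finset (Fin 6)) j < l i j then 0
        else if chosenCost proj c ({3,5} : Finset (Fin 6)) j ≤ u i j then
          chosenCost proj c ({3,5} : Finset (Fin 6)) j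
        else u i j) = 1 + (b - 3) := by
      intro i
      obtain ⟨hl0, hu0, hl1, hu1⟩ := hbounds i
      rw [Fin.sum_univ_two, h35_0, h35_1, hl0, hu0, hl1, hu1]
      norm_num
    simp only [this, Finset.sum_const, Finset.card_univ, Fintype.card_fin, smul_eq_mul]
  refine ⟨?_, ?_, hcap, ?_, ?_⟩
  · constructor
    · intro j
      fin_cases j <;>
        simp [Finset.filter_insert, Finset.filter_singleton, hp3, hp5]
    · rw [show ∑ d ∈ ({3, 5} : Finset (Fin 6)), c d = c 3 + c 5 by
        simp [Finset.sum_insert, Finset.sum_singleton], hc3, hc5]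
      omega
  · constructor
    · intro j
      fin_cases j <;>
        simp [Finset.filter_insert, Finset.filter_singleton, hp2, hp5]
    · rw [show ∑ d ∈ ({2, 5} : Finset (Fin 6)), c d = c 2 + c 5 by
        simp [Finset.sum_insert, Finset.sum_singleton], hc2, hc5]
      omega
  · intro T _
    rw [hcap]
    unfold cappedUtilTotal
    calc ∑ i : Fin n, ∑ j : Fin 2,
          (if chosenCost proj c T j < l i j then 0
           else if chosenCost proj c T j ≤ u i j then chosenCost proj c T j else u i j)
        ≤ ∑ i : Fin n, (1 + (b - 3)) := by
          apply Finset.sum_le_sum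
          intro i _
          obtain ⟨hl0, hu0, hl1, hu1⟩ := hbounds i
          rw [Fin.sum_univ_two, hl0, hu0, hl1, hu1]
          have h0 : (if chosenCost proj c T 0 < 1 then 0
              else if chosenCost proj c T 0 ≤ 1 then chosenCost proj c T 0 else 1) ≤ 1 := by
            split <;> [omega; (split <;> omega)]
          have h1 : (if chosenCost proj c T 1 < b - 3 then 0
              else if chosenCost proj c T 1 ≤ b - 3 then chosenCost proj c T 1 else b - 3)
              ≤ b - 3 := by
            split <;> [omega; (split <;> omega)]
          omega
      _ = n * (1 + (b - 3)) := by
          simp [Finset.sum_const, Finset.card_univ, mul_comm]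
  · intro i
    obtain ⟨hl0, hu0, hl1, hu1⟩ := hbounds i
    rw [h25_0, h35_0, hu0]
    omega
end

section
/- Rounding lemma for the FPTAS: let each project-degree d have score s(d) ∈ ℕ with maximum M = max_d s(d), fix ε ∈ (0,1) and m ≥ 1, and define rounded scores s'(d) = ⌊s(d)·m/(ε·M)⌋. If O and S are valid sets (each with at most m degrees of positive score), S maximizes ∑_{d∈S} s'(d) among valid sets, and M ≤ ∑_{d∈O} s(d), then ∑_{d∈S} s(d) ≥ (1−ε)·∑_{d∈O} s(d). -/
open Finset

/-! With `c = εM/m` the rounded score is `s'(d) = ⌊s(d)/c⌋`, so `c s'(d) ≤ s(d) < c (s'(d) + 1)`.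
Comparing `O` with `S` through the rounded scores therefore loses less than `c` per element of
`O`, in total at most `c m = εM`, and `M ≤ OPT` turns this additive loss into `ε OPT`. -/

section Rounding

variable {K : Type*} [Field K] [LinearOrder K] [IsStrictOrderedRing K] [FloorSemiring K]

theorem mul_floor_div_le {x c : K} (hx : 0 ≤ x) (hc : 0 ≤ c) : c * ⌊x / c⌋₊ ≤ x := by
  rcases hc.eq_or_lt with rfl | hc
  · simpa using hx
  · calc c * ⌊x / c⌋₊ ≤ c * (x / c) := by gcongr; exact Nat.floor_le (by positivity)
      _ = x := mul_div_cancel₀ x hc.ne'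

theorem lt_mul_floor_div_add_one (x : K) {c : K} (hc : 0 < c) : x < c * (⌊x / c⌋₊ + 1) :=
  calc x = c * (x / c) := (mul_div_cancel₀ x hc.ne').symm
    _ < c * (⌊x / c⌋₊ + 1) := by gcongr; exact Nat.lt_floor_add_one _

end Rounding

theorem sum_le_sum_add_mul_card_of_rounded {D K : Type*}
    [CommSemiring K] [PartialOrder K] [IsOrderedRing K]
    {s : D → K} {r : D → ℕ} {c : K} {O S : Finset D}
    (hrS : ∀ d ∈ S, c * r d ≤ s d) (hrO : ∀ d ∈ O, s d ≤ c * (r d + 1))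
    (hOS : ∑ d ∈ O, r d ≤ ∑ d ∈ S, r d) (hc : 0 ≤ c) :
    ∑ d ∈ O, s d ≤ ∑ d ∈ S, s d + c * #O :=
  calc ∑ d ∈ O, s d ≤ ∑ d ∈ O, c * (r d + 1) := sum_le_sum hrO
    _ = c * ∑ d ∈ O, (r d : K) + c * #O := by
      simp only [mul_add, mul_one, sum_add_distrib, ← mul_sum, sum_const, nsmul_eq_mul, mul_comm]
    _ ≤ c * ∑ d ∈ S, (r d : K) + c * #O := by
      gcongr ?_ + _
      rw [← Nat.cast_sum, ← Nat.cast_sum]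
      exact mul_le_mul_of_nonneg_left (Nat.mono_cast hOS) hc
    _ ≤ ∑ d ∈ S, s d + c * #O := by rw [mul_sum]; gcongr with d hd; exact hrS d hd

theorem fptas_rounding_general {D : Type*} (Valid : Finset D → Prop)
    (s : D → ℕ) (M m : ℕ) (ε : ℝ)
    (hε0 : 0 < ε) (hm : 1 ≤ m)
    (hMub : ∀ d, s d ≤ M)
    (s' : D → ℕ) (hs' : ∀ d, s' d = ⌊((s d : ℝ) * m) / (ε * M)⌋₊)
    (O S : Finset D) (hO : Valid O)
    (hOcard : O.card ≤ m)
    (hmax : ∀ T : Finset D, Valid T → ∑ d ∈ T, s' d ≤ ∑ d ∈ S, s' d)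
    (hMopt : (M : ℝ) ≤ ∑ d ∈ O, (s d : ℝ)) :
    (1 - ε) * (∑ d ∈ O, (s d : ℝ)) ≤ ∑ d ∈ S, (s d : ℝ) := by
  set c : ℝ := ε * M / m
  have hmR : (0 : ℝ) < m := by exact_mod_cast hm
  have hc : 0 ≤ c := by positivity
  have hs'c : ∀ d, s' d = ⌊(s d : ℝ) / c⌋₊ := fun d => by rw [hs', div_div_eq_mul_div]
  have hup : ∀ d, (s d : ℝ) ≤ c * (s' d + 1) := fun d => by
    rcases Nat.eq_zero_or_pos M with hM | hM
    · rw [show s d = 0 by have := hMub d; omega, Nat.cast_zero]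
      positivity
    · exact hs'c d ▸ (lt_mul_floor_div_add_one _ (by positivity)).le
  have hrounded := sum_le_sum_add_mul_card_of_rounded (O := O) (S := S)
    (fun d _ => hs'c d ▸ mul_floor_div_le (Nat.cast_nonneg _) hc) (fun d _ => hup d)
    (hmax O hO) hc
  have hloss : c * #O ≤ ε * ∑ d ∈ O, (s d : ℝ) :=
    calc c * #O ≤ c * m := by gcongr
      _ = ε * M := div_mul_cancel₀ _ hmR.ne'
      _ ≤ ε * ∑ d ∈ O, (s d : ℝ) := by gcongr
  linarith

/-- rounding lemma for the FPTAS for `R_{c(S)}`. -/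
theorem fptas_rounding {D : Type*} (Valid : Finset D → Prop)
    (s : D → ℕ) (M m : ℕ) (ε : ℝ)
    (hε0 : 0 < ε) (hε1 : ε < 1) (hm : 1 ≤ m)
    (hMub : ∀ d, s d ≤ M) (hMeq : ∃ d, s d = M)
    (s' : D → ℕ) (hs' : ∀ d, s' d = ⌊((s d : ℝ) * m) / (ε * M)⌋₊)
    (O S : Finset D) (hO : Valid O) (hSv : Valid S)
    (hOcard : O.card ≤ m) (hScard : S.card ≤ m)
    (hmax : ∀ T : Finset D, Valid T → ∑ d ∈ T, s' d ≤ ∑ d ∈ S, s' d)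
    (hMopt : (M : ℝ) ≤ ∑ d ∈ O, (s d : ℝ)) :
    (1 - ε) * (∑ d ∈ O, (s d : ℝ)) ≤ ∑ d ∈ S, (s d : ℝ) :=
  fptas_rounding_general Valid s M m ε hε0 hm hMub s' hs' O S hO hOcard hmax hMopt
end

section
/- Reduction correctness for NP-hardness of R_{‖·‖}: given an approval-based PB instance (projects with costs c(j), budget b, each voter i approving a set A_i ⊆ P), construct the ranged instance where each project has degrees of costs 0 and c(j), every voter sets u_i(j) = c(j) for all j, and l_i(j) = c(j) iff j ∈ A_i (else 0). Let Z = ∑_i c(A_i). Then for every valid set S, the total distance disutility of S equals Z − ∑_i c(A_i ∩ S); consequently there exists a feasible set with approval-cost utility at least x iff there exists a valid set with total disutility at most Z − x. -/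
open Finset

lemma aux_key {V P : Type*} [Fintype V] [Fintype P] [DecidableEq P]
    (c : P → ℕ) (A : V → Finset P) (S : Finset P) :
    ((∑ i : V, ∑ j : P,
          (((if j ∈ A i then c j else 0) - (if j ∈ S then c j else 0)) +
            ((if j ∈ S then c j else 0) - c j)) : ℕ) : ℤ)
        = (∑ i : V, ∑ j ∈ A i, (c j : ℤ)) - ∑ i : V, ∑ j ∈ A i ∩ S, (c j : ℤ) := by
  have h1 : ∀ i : V, (∑ j : P,
          (((if j ∈ A i then c j else 0) - (if j ∈ S then c j else 0)) +
            ((if j ∈ S then c j else 0) - c j)) : ℕ)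
      = ∑ j ∈ A i \ S, c j := by
    intro i
    have : ∀ j : P,
        (((if j ∈ A i then c j else 0) - (if j ∈ S then c j else 0)) +
            ((if j ∈ S then c j else 0) - c j))
        = if j ∈ A i \ S then c j else 0 := by
      intro j
      by_cases hA : j ∈ A i <;> by_cases hS : j ∈ S <;>
        simp [hA, hS, Finset.mem_sdiff]
    rw [Finset.sum_congr rfl fun j _ => this j, Finset.sum_ite_mem,
      Finset.univ_inter]
  have h2 : ∀ i : V, (∑ j ∈ A i \ S, (c j : ℤ))
      = ∑ j ∈ A i, (c j : ℤ) - ∑ j ∈ A i ∩ S, (c j : ℤ) := by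
    intro i
    have := Finset.sum_inter_add_sum_sdiff (A i) S (fun j => (c j : ℤ))
    omega
  push_cast [h1]
  rw [Finset.sum_congr rfl fun i _ => h2 i, Finset.sum_sub_distrib]

/-- correctness of the reduction proving NP-hardness of `R_{‖·‖}`.
A valid set of the constructed ranged instance is identified with the set `S ⊆ P`
of projects funded at full cost; the bounds are `u_i(j) = c j` and
`l_i(j) = c j` iff `j ∈ A i` (else `0`). -/
theorem reduction_correct_disUtil
    {V P : Type*} [Fintype V] [Fintype P] [DecidableEq P]
    (c : P → ℕ) (b : ℕ) (A : V → Finset P) (x : ℕ) :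
    (∀ S : Finset P, ∑ j ∈ S, c j ≤ b →
      ((∑ i : V, ∑ j : P,
          (((if j ∈ A i then c j else 0) - (if j ∈ S then c j else 0)) +
            ((if j ∈ S then c j else 0) - c j)) : ℕ) : ℤ)
        = (∑ i : V, ∑ j ∈ A i, (c j : ℤ)) - ∑ i : V, ∑ j ∈ A i ∩ S, (c j : ℤ)) ∧
    ((∃ S : Finset P, ∑ j ∈ S, c j ≤ b ∧
        (x : ℤ) ≤ ∑ i : V, ∑ j ∈ A i ∩ S, (c j : ℤ)) ↔
      (∃ S : Finset P, ∑ j ∈ S, c j ≤ b ∧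
        ((∑ i : V, ∑ j : P,
            (((if j ∈ A i then c j else 0) - (if j ∈ S then c j else 0)) +
              ((if j ∈ S then c j else 0) - c j)) : ℕ) : ℤ)
          ≤ (∑ i : V, ∑ j ∈ A i, (c j : ℤ)) - (x : ℤ))) := by
  constructor
  · intro S _; exact aux_key c A S
  · constructor
    · rintro ⟨S, hb, hx⟩
      exact ⟨S, hb, by rw [aux_key c A S]; omega⟩
    · rintro ⟨S, hb, hx⟩
      refine ⟨S, hb, ?_⟩
      rw [aux_key c A S] at hx; omega
end

section
/- Reduction correctness for NP-hardness of R_{c(S)}: given an approval-based PB instance (projects with costs c(j), budget b, approval sets A_i), construct the ranged instance where each project j has degrees of costs 0 and c(j), every voter sets l_i(j) = 0 for all j, and u_i(j) = c(j) iff j ∈ A_i (else u_i(j) = 0). Then for every feasible set S ⊆ P (identified with the valid set funding exactly the projects of S at full cost), the total cost utility under R_{c(S)} equals ∑_{i∈N} ∑_{j ∈ A_i ∩ S} c(j); hence the two instances have identical optimal objective values. -/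
open Finset

theorem reduction_key {V P : Type*} [Fintype V] [Fintype P] [DecidableEq P]
    (c : P → ℕ) (A : V → Finset P) (S : Finset P) :
    (∑ i : V, ∑ j : P,
        if (0 : ℕ) ≤ (if j ∈ S then c j else 0) ∧
            (if j ∈ S then c j else 0) ≤ (if j ∈ A i then c j else 0) then
          (if j ∈ S then c j else 0)
        else 0)
      = ∑ i : V, ∑ j ∈ A i ∩ S, c j := by
  refine Finset.sum_congr rfl fun i _ => ?_
  rw [show A i ∩ S = univ.filter (· ∈ A i ∩ S) by ext x; simp, Finset.sum_filter]
  refine Finset.sum_congr rfl fun j _ => ?_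
  by_cases hS : j ∈ S <;> by_cases hA : j ∈ A i <;>
    simp [hS, hA, Finset.mem_inter]

/-- correctness of the reduction proving NP-hardness of `R_{c(S)}`.
In the constructed ranged instance `l_i(j) = 0`, `u_i(j) = c j` iff `j ∈ A i`
(else `0`), and a feasible `S ⊆ P` is identified with the valid set funding
exactly the projects of `S` at full cost. -/
theorem reduction_correct_costUtil
    {V P : Type*} [Fintype V] [Fintype P] [DecidableEq P]
    (c : P → ℕ) (b : ℕ) (A : V → Finset P) :
    (∀ S : Finset P, ∑ j ∈ S, c j ≤ b →
      (∑ i : V, ∑ j : P,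
        if (0 : ℕ) ≤ (if j ∈ S then c j else 0) ∧
            (if j ∈ S then c j else 0) ≤ (if j ∈ A i then c j else 0) then
          (if j ∈ S then c j else 0)
        else 0)
      = ∑ i : V, ∑ j ∈ A i ∩ S, c j) ∧
    (∀ s : ℕ,
      (∃ S : Finset P, ∑ j ∈ S, c j ≤ b ∧ s ≤ ∑ i : V, ∑ j ∈ A i ∩ S, c j) ↔
      (∃ S : Finset P, ∑ j ∈ S, c j ≤ b ∧
        s ≤ ∑ i : V, ∑ j : P,
          if (0 : ℕ) ≤ (if j ∈ S then c j else 0) ∧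
              (if j ∈ S then c j else 0) ≤ (if j ∈ A i then c j else 0) then
            (if j ∈ S then c j else 0)
          else 0)) := by
  constructor
  · intro S _
    exact reduction_key c A S
  · intro s
    constructor
    · rintro ⟨S, hb, hs⟩
      exact ⟨S, hb, by rw [reduction_key c A S]; exact hs⟩
    · rintro ⟨S, hb, hs⟩
      exact ⟨S, hb, by rw [← reduction_key c A S]; exact hs⟩
end
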